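/- Let G = (√5+1)/2 and 1 ≤ α ≤ G. Define h_α(x) = (3 log G)^{−1} times: 1/(x+G+1) for x ∈ [α−2, (1−α)/α); 1/(x+1) for x ∈ [(1−α)/α, (α−1)/(2−α)); and 1/(x+G−1) for x ∈ [(α−1)/(2−α), α). Then ∫_{α−2}^{α} h_α(x) dx = 1. -/

import Mathlib

/-- The invariant density h_α for 1 ≤ α ≤ G. -/
noncomputable def hDen (α x : ℝ) : ℝ :=
  let G : ℝ := (Real.sqrt 5 + 1)/2
  (3 * Real.log G)⁻¹ *
    (if x < (1-α)/α then 1/(x+G+1)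
     else if x < (α-1)/(2-α) then 1/(x+1)
     else 1/(x+G-1))

/-!
On each of the three pieces of `[α - 2, α]` cut out by the breakpoints
`(1 - α)/α ≤ 0 ≤ (α - 1)/(2 - α)`, `h_α` is `(3 log φ)⁻¹ (x + k)⁻¹`, whose integral is a difference
of logarithms. The two inner terms `log (α + φ - 1)` cancel, and since `(1 - α)/α + 1 = 1/α` and
`(α - 1)/(2 - α) + 1 = 1/(2 - α)` the rest collapses to `log ((1 + αφ) / (α(2 - φ) + 2φ - 3))`.
By `φ² = φ + 1` this quotient is `φ³`, so the total mass is `3 log φ / (3 log φ) = 1`.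
-/

open MeasureTheory intervalIntegral Set Real
open scoped goldenRatio

theorem hDen_eq (α x : ℝ) : hDen α x = (3 * log φ)⁻¹ *
    (if x < (1 - α) / α then (x + (φ + 1))⁻¹
     else if x < (α - 1) / (2 - α) then (x + 1)⁻¹ else (x + (φ - 1))⁻¹) := by
  simp only [hDen, goldenRatio, add_comm (√5) 1, one_div, add_assoc, add_sub_assoc]

theorem hDen_eqOn_Iio (α : ℝ) :
    EqOn (hDen α) (fun x => (3 * log φ)⁻¹ * (x + (φ + 1))⁻¹) (Iio ((1 - α) / α)) := by
  intro x hx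
  rw [hDen_eq, if_pos (mem_Iio.1 hx)]

theorem hDen_eqOn_Ico (α : ℝ) :
    EqOn (hDen α) (fun x => (3 * log φ)⁻¹ * (x + 1)⁻¹) (Ico ((1 - α) / α) ((α - 1) / (2 - α))) := by
  intro x hx
  rw [hDen_eq, if_neg hx.1.not_gt, if_pos hx.2]

theorem hDen_eqOn_Ici {α : ℝ} (h : (1 - α) / α ≤ (α - 1) / (2 - α)) :
    EqOn (hDen α) (fun x => (3 * log φ)⁻¹ * (x + (φ - 1))⁻¹) (Ici ((α - 1) / (2 - α))) := by
  intro x hx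
  rw [hDen_eq, if_neg (h.trans hx).not_gt, if_neg (not_lt.2 hx)]

theorem integral_eqOn_Ioo_const_mul_inv_add {f : ℝ → ℝ} {a b k C : ℝ} (hab : a ≤ b)
    (hk : 0 < a + k) (hf : EqOn f (fun x => C * (x + k)⁻¹) (Ioo a b)) :
    IntervalIntegrable f volume a b ∧ ∫ x in a..b, f x = C * (log (b + k) - log (a + k)) := by
  have hbk : 0 < b + k := by linarith
  have hg : IntervalIntegrable (fun x => C * (x + k)⁻¹) volume a b := by
    refine (continuousOn_const.mul <|
      ContinuousOn.inv₀ (by fun_prop) fun x hx => ?_).intervalIntegrable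
    rw [uIcc_of_le hab] at hx
    linarith [hx.1]
  refine ⟨(intervalIntegrable_congr_uIoo (by rwa [uIoo_of_le hab])).mpr hg, ?_⟩
  rw [integral_congr_Ioo_of_le hab hf, intervalIntegral.integral_const_mul,
    integral_comp_add_right (fun x => x⁻¹), integral_inv_of_pos hk hbk,
    log_div hbk.ne' hk.ne']

theorem sq_sub_self_sub_one_nonpos_of_le_goldenRatio {α : ℝ} (h0 : 0 ≤ α) (h : α ≤ φ) :
    α ^ 2 - α - 1 ≤ 0 := by
  -- `α² - α - 1 = (α - φ)(α - ψ)` with `ψ < 0`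
  nlinarith [goldenConj_neg, goldenRatio_add_goldenConj, goldenRatio_mul_goldenConj]

theorem one_add_mul_goldenRatio (α : ℝ) : 1 + α * φ = φ ^ 3 * (α * (2 - φ) + 2 * φ - 3) := by
  linear_combination (α * (φ ^ 2 - φ) - 2 * φ ^ 2 + φ - 1) * goldenRatio_sq

theorem one_sub_div_add_one_pos {α : ℝ} (hα : 0 < α) : 0 < (1 - α) / α + 1 := by
  rw [div_add_one hα.ne', sub_add_cancel]
  positivity

theorem sub_two_le_hDen_breakpoints {α : ℝ} (h1 : 1 ≤ α) (h2 : α ≤ φ) :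
    α - 2 ≤ (1 - α) / α ∧ (1 - α) / α ≤ 0 ∧ 0 ≤ (α - 1) / (2 - α) ∧ (α - 1) / (2 - α) ≤ α := by
  have hα : 0 < α := by linarith
  have hα2 : 0 < 2 - α := by linarith [goldenRatio_lt_two]
  have hq := sq_sub_self_sub_one_nonpos_of_le_goldenRatio hα.le h2
  exact ⟨by rw [le_div_iff₀ hα]; nlinarith, div_nonpos_of_nonpos_of_nonneg (by linarith) hα.le,
    div_nonneg (by linarith) hα2.le, by rw [div_le_iff₀ hα2]; nlinarith⟩

theorem log_breakpoint_ratios {α : ℝ} (h1 : 1 ≤ α) (h2 : α ≤ φ) :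
    log ((1 - α) / α + (φ + 1)) - log ((1 - α) / α + 1) =
      3 * log φ + (log ((α - 1) / (2 - α) + (φ - 1)) - log ((α - 1) / (2 - α) + 1)) := by
  have hα : 0 < α := by linarith
  have hα2 : 0 < 2 - α := by linarith [goldenRatio_lt_two]
  have hc₁ := one_sub_div_add_one_pos hα
  have hc₂ : 0 < (α - 1) / (2 - α) + 1 := by linarith [(sub_two_le_hDen_breakpoints h1 h2).2.2.1]
  have hD : 0 < α * (2 - φ) + 2 * φ - 3 := by nlinarith [goldenRatio_lt_two, one_lt_goldenRatio]
  have hleft : (1 - α) / α + (φ + 1) = (1 + α * φ) * ((1 - α) / α + 1) := by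
    field_simp; ring
  have hright :
      (α - 1) / (2 - α) + (φ - 1) = (α * (2 - φ) + 2 * φ - 3) * ((α - 1) / (2 - α) + 1) := by
    field_simp; ring
  rw [hleft, hright, log_mul (by positivity) hc₁.ne', log_mul hD.ne' hc₂.ne',
    one_add_mul_goldenRatio, log_mul (by positivity) hD.ne', log_pow]
  push_cast
  ring

theorem stmt9 (α : ℝ) (h1 : 1 ≤ α) (h2 : α ≤ (Real.sqrt 5 + 1)/2) :
    ∫ x in (α-2)..α, hDen α x = 1 := by
  rw [add_comm, ← goldenRatio] at h2
  obtain ⟨hc₁, hc₁_nonpos, hc₂_nonneg, hc₂⟩ := sub_two_le_hDen_breakpoints h1 h2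
  have hc₁₂ := hc₁_nonpos.trans hc₂_nonneg
  have hφ := one_lt_goldenRatio
  obtain ⟨i₁, e₁⟩ := integral_eqOn_Ioo_const_mul_inv_add hc₁ (by linarith)
    ((hDen_eqOn_Iio α).mono Ioo_subset_Iio_self)
  obtain ⟨i₂, e₂⟩ := integral_eqOn_Ioo_const_mul_inv_add hc₁₂
    (one_sub_div_add_one_pos (by linarith))
    ((hDen_eqOn_Ico α).mono Ioo_subset_Ico_self)
  obtain ⟨i₃, e₃⟩ := integral_eqOn_Ioo_const_mul_inv_add hc₂ (by linarith)
    ((hDen_eqOn_Ici hc₁₂).mono (Ioo_subset_Ico_self.trans Ico_subset_Ici_self))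
  rw [← integral_add_adjacent_intervals i₁ (i₂.trans i₃), ← integral_add_adjacent_intervals i₂ i₃,
    e₁, e₂, e₃, ← mul_add, ← mul_add, show α - 2 + (φ + 1) = α + (φ - 1) by ring]
  convert inv_mul_cancel₀ (by positivity [log_pos hφ] : 3 * log φ ≠ 0) using 2
  linarith [log_breakpoint_ratios h1 h2]
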